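/- Let A ∈ ℝ^{n×n} be exponentially stable, let C ∈ ℝ^{p×n}, let B_i, B_j ∈ ℝ^n, let D_i, D_j ∈ ℝ^p, and let t_i, t_j ∈ ℕ with t_j > t_i; set τ = t_j − t_i. Let y_i, y_j : ℕ → ℝ^p be the state-space impulse-response signals with data (A, B_i, C, D_i) and activation time t_i, and (A, B_j, C, D_j) and activation time t_j, respectively. Then ∑_{t=0}^∞ y_i(t) · y_j(t) = B_iᵀ (A^{τ−1})ᵀ Cᵀ D_j + B_iᵀ (A^{τ})ᵀ P₀ B_j, where P₀ = ∑_{t=0}^∞ (A^t)ᵀ Cᵀ C A^t is the observability Gramian and · denotes the Euclidean inner product in ℝ^p. -/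

import Mathlib

/-!
For `t < t_j` the signal `y_j` vanishes, so only `t = t_j` and `t = t_j + 1 + s` contribute.
The first term pairs `C A^(τ-1) B_i` with `D_j`; for the others
`y_i · y_j = B_iᵀ (A^τ)ᵀ ((A^s)ᵀ Cᵀ C A^s) B_j`, and since `‖A^s‖` decays geometrically the
Gramian series converges and `X ↦ B_iᵀ (A^τ)ᵀ X B_j` can be passed through the sum.
-/

open Matrix

attribute [local instance] Matrix.normedAddCommGroup

/-- `A` is exponentially stable: `‖A^t‖ ≤ c·r^t` for some `c ≥ 0` and `r ∈ [0,1)`. -/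
def ExpStable {n : ℕ} (A : Matrix (Fin n) (Fin n) ℝ) : Prop :=
  ∃ (c r : ℝ), 0 ≤ c ∧ 0 ≤ r ∧ r < 1 ∧ ∀ t : ℕ, ‖A ^ t‖ ≤ c * r ^ t

/-- State-space impulse-response signal with data `(A, B, C, D)` and activation time `t₀`:
`y t = 0` for `t < t₀`, `y t₀ = D`, and `y t = C A^(t-t₀-1) B` for `t > t₀`. -/
noncomputable def ssImpulse {n p : ℕ} (A : Matrix (Fin n) (Fin n) ℝ) (B : Fin n → ℝ)
    (C : Matrix (Fin p) (Fin n) ℝ) (D : Fin p → ℝ) (t₀ : ℕ) :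
    ℕ → EuclideanSpace ℝ (Fin p) :=
  fun t => if t < t₀ then 0 else if t = t₀ then WithLp.toLp 2 D else WithLp.toLp 2 (C *ᵥ ((A ^ (t - t₀ - 1)) *ᵥ B))

namespace Matrix

theorem norm_mul_le_card_mul {l m n α : Type*} [Fintype l] [Fintype m] [Fintype n] [NormedRing α]
    (M : Matrix l m α) (N : Matrix m n α) : ‖M * N‖ ≤ Fintype.card m * ‖M‖ * ‖N‖ := by
  refine (norm_le_iff (by positivity)).2 fun i j => ?_
  calc ‖(M * N) i j‖ ≤ ∑ k, ‖M i k * N k j‖ := norm_sum_le _ _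
    _ ≤ ∑ _k : m, ‖M‖ * ‖N‖ := by
        gcongr with k
        exact (norm_mul_le _ _).trans <| mul_le_mul (norm_entry_le_entrywise_sup_norm M)
          (norm_entry_le_entrywise_sup_norm N) (norm_nonneg _) (norm_nonneg _)
    _ = Fintype.card m * ‖M‖ * ‖N‖ := by simp [mul_assoc]

theorem mulVec_dotProduct_mulVec {l m n R : Type*} [Fintype l] [Fintype m] [Fintype n]
    [CommSemiring R] (M : Matrix l m R) (N : Matrix l n R) (u : m → R) (v : n → R) :
    (M *ᵥ u) ⬝ᵥ (N *ᵥ v) = u ⬝ᵥ (Mᵀ * N) *ᵥ v := by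
  rw [← mulVec_mulVec, dotProduct_transpose_mulVec, dotProduct_comm]

theorem _root_.HasSum.dotProduct_mulVec {ι m n R : Type*} [Fintype m] [Fintype n]
    [NonUnitalNonAssocSemiring R] [TopologicalSpace R] [IsTopologicalSemiring R]
    {f : ι → Matrix m n R} {a : Matrix m n R} (h : HasSum f a) (u : m → R) (v : n → R) :
    HasSum (fun i => u ⬝ᵥ f i *ᵥ v) (u ⬝ᵥ a *ᵥ v) := by
  let L : Matrix m n R →+ R :=
    { toFun := fun X => u ⬝ᵥ X *ᵥ v
      map_zero' := by rw [zero_mulVec, dotProduct_zero]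
      map_add' := fun X Y => by rw [add_mulVec, dotProduct_add] }
  exact h.map L (continuous_const.dotProduct (continuous_id.matrix_mulVec continuous_const))

end Matrix

theorem ExpStable.summable_gramian {n p : ℕ} {A : Matrix (Fin n) (Fin n) ℝ} (hA : ExpStable A)
    (C : Matrix (Fin p) (Fin n) ℝ) : Summable fun t : ℕ => (A ^ t)ᵀ * Cᵀ * C * A ^ t := by
  obtain ⟨c, r, hc, hr0, hr1, hpow⟩ := hA
  have hCA (t : ℕ) : ‖C * A ^ t‖ ≤ n * ‖C‖ * (c * r ^ t) := by
    simpa only [Fintype.card_fin] using (norm_mul_le_card_mul C (A ^ t)).trans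
      (mul_le_mul_of_nonneg_left (hpow t) (by positivity))
  have hterm (t : ℕ) : ‖(A ^ t)ᵀ * Cᵀ * C * A ^ t‖ ≤ p * (n * ‖C‖ * c) ^ 2 * (r ^ 2) ^ t := by
    rw [show (A ^ t)ᵀ * Cᵀ * C * A ^ t = (C * A ^ t)ᵀ * (C * A ^ t) by
      simp [transpose_mul, Matrix.mul_assoc]]
    calc _ ≤ p * ‖C * A ^ t‖ * ‖C * A ^ t‖ := by
          simpa only [norm_transpose, Fintype.card_fin] using
            norm_mul_le_card_mul (C * A ^ t)ᵀ (C * A ^ t)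
      _ ≤ p * (n * ‖C‖ * (c * r ^ t)) * (n * ‖C‖ * (c * r ^ t)) := by gcongr <;> exact hCA t
      _ = _ := by ring
  have hgeom := (summable_geometric_of_lt_one (by positivity)
    (pow_lt_one₀ hr0 hr1 two_ne_zero)).mul_left (p * (n * ‖C‖ * c) ^ 2)
  -- The sup norm is only a local instance, so completeness has to be supplied by hand.
  exact @Summable.of_norm_bounded _ _ _ (inferInstanceAs (CompleteSpace (Fin n → Fin n → ℝ))) _ _
    hgeom hterm

section ssImpulse

variable {n p : ℕ} {A : Matrix (Fin n) (Fin n) ℝ} {C : Matrix (Fin p) (Fin n) ℝ}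
  {B Bi Bj : Fin n → ℝ} {D Di Dj : Fin p → ℝ} {t₀ t ti tj : ℕ}

theorem ssImpulse_of_lt (h : t < t₀) : ssImpulse A B C D t₀ t = 0 := if_pos h

theorem ssImpulse_self : ssImpulse A B C D t₀ t₀ = WithLp.toLp 2 D := by simp [ssImpulse]

theorem ssImpulse_of_gt (h : t₀ < t) :
    ssImpulse A B C D t₀ t = WithLp.toLp 2 ((C * A ^ (t - t₀ - 1)) *ᵥ B) := by
  simp [ssImpulse, h.not_gt, h.ne', mulVec_mulVec]

theorem inner_ssImpulse_activation (h : ti < tj) :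
    inner ℝ (ssImpulse A Bi C Di ti tj) (ssImpulse A Bj C Dj tj tj) =
      Bi ⬝ᵥ ((A ^ (tj - ti - 1))ᵀ * Cᵀ) *ᵥ Dj := by
  rw [ssImpulse_of_gt h, ssImpulse_self, EuclideanSpace.inner_toLp_toLp, star_trivial,
    ← transpose_mul, dotProduct_transpose_mulVec]

theorem inner_ssImpulse_after_activation (h : ti < tj) (s : ℕ) :
    inner ℝ (ssImpulse A Bi C Di ti (s + (tj + 1))) (ssImpulse A Bj C Dj tj (s + (tj + 1))) =
      Bi ⬝ᵥ ((A ^ (tj - ti))ᵀ * ((A ^ s)ᵀ * Cᵀ * C * A ^ s)) *ᵥ Bj := by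
  rw [ssImpulse_of_gt (by omega), ssImpulse_of_gt (by omega),
    EuclideanSpace.inner_toLp_toLp, star_trivial, dotProduct_comm, mulVec_dotProduct_mulVec,
    show s + (tj + 1) - ti - 1 = s + (tj - ti) by omega, show s + (tj + 1) - tj - 1 = s by omega,
    pow_add]
  simp only [transpose_mul, Matrix.mul_assoc]

end ssImpulse

theorem cross_term_distinct_activation_times (n p : ℕ)
    (A : Matrix (Fin n) (Fin n) ℝ) (hA : ExpStable A)
    (C : Matrix (Fin p) (Fin n) ℝ)
    (Bi Bj : Fin n → ℝ) (Di Dj : Fin p → ℝ)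
    (ti tj : ℕ) (htij : ti < tj) (τ : ℕ) (hτ : τ = tj - ti)
    (P₀ : Matrix (Fin n) (Fin n) ℝ)
    (hP₀ : P₀ = ∑' t : ℕ, (A ^ t)ᵀ * Cᵀ * C * A ^ t) :
    (∑' t : ℕ, (inner ℝ (ssImpulse A Bi C Di ti t) (ssImpulse A Bj C Dj tj t) : ℝ)) =
      Bi ⬝ᵥ (((A ^ (τ - 1))ᵀ * Cᵀ) *ᵥ Dj) + Bi ⬝ᵥ (((A ^ τ)ᵀ * P₀) *ᵥ Bj) := by
  subst hτ
  set y : ℕ → ℝ := fun t => inner ℝ (ssImpulse A Bi C Di ti t) (ssImpulse A Bj C Dj tj t)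
  have head : ∑ t ∈ Finset.range (tj + 1), y t = Bi ⬝ᵥ ((A ^ (tj - ti - 1))ᵀ * Cᵀ) *ᵥ Dj := by
    rw [Finset.sum_range_succ, Finset.sum_eq_zero fun t ht => ?_, zero_add]
    · exact inner_ssImpulse_activation htij
    · simp only [y, ssImpulse_of_lt (Finset.mem_range.1 ht), inner_zero_right]
  have tail : HasSum (fun s => y (s + (tj + 1))) (Bi ⬝ᵥ ((A ^ (tj - ti))ᵀ * P₀) *ᵥ Bj) := by
    simpa only [y, inner_ssImpulse_after_activation htij] using
      ((hP₀ ▸ (hA.summable_gramian C).hasSum).mul_left _).dotProduct_mulVec Bi Bj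
  rw [← head]
  exact ((hasSum_nat_add_iff' (tj + 1)).1 (by rwa [add_sub_cancel_left])).tsum_eq
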